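/- Let G = (V,E) be a connected bipartite graph on n vertices and let M be a generalized Laplacian of G. Let λ_n be the largest eigenvalue of M and f_n an eigenvector of M corresponding to λ_n. Then λ_n is a simple eigenvalue and 𝔚(f_n) = 𝔖(f_n) = n, where the nodal domains are taken with respect to the all-positive signature σ ≡ +1 on G. -/

import Mathlib

open Matrix Polynomial

section NodalDefs

variable {V : Type*}

/-- The product of the signature over consecutive pairs of a list of vertices. -/
noncomputable def chainSign (σ : V → V → ℝ) (l : List V) : ℝ :=
  ((l.zip l.tail).map fun p => σ p.1 p.2).prod

/-- One step of a strong nodal domain walk. -/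
def SWalkStep (G : SimpleGraph V) (σ : V → V → ℝ) (f : V → ℝ) (u v : V) : Prop :=
  G.Adj u v ∧ 0 < f u * σ u v * f v

/-- `x` and `y` are connected by a strong nodal domain walk (S-walk). -/
def SConn (G : SimpleGraph V) (σ : V → V → ℝ) (f : V → ℝ) (x y : V) : Prop :=
  ∃ l : List V, 2 ≤ l.length ∧ l.Chain' (SWalkStep G σ f) ∧
    l.head? = some x ∧ l.getLast? = some y

/-- The strong nodal domain (as a vertex set) containing the non-zero `w`. -/
def strongClass (G : SimpleGraph V) (σ : V → V → ℝ) (f : V → ℝ) (w : V) : Set V :=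
  {x | f x ≠ 0 ∧ (x = w ∨ SConn G σ f x w)}

/-- The set of strong nodal domains (as vertex sets) of `f`. -/
def strongDomains (G : SimpleGraph V) (σ : V → V → ℝ) (f : V → ℝ) : Set (Set V) :=
  {D | ∃ w, f w ≠ 0 ∧ D = strongClass G σ f w}

/-- 𝔖(f): the number of strong nodal domains of `f`. -/
noncomputable def numStrong (G : SimpleGraph V) (σ : V → V → ℝ) (f : V → ℝ) : ℕ :=
  Nat.card (strongDomains G σ f)

/-- A list of vertices is a weak nodal domain walk (W-walk). -/
def IsWWalk (G : SimpleGraph V) (σ : V → V → ℝ) (f : V → ℝ) (l : List V) : Prop :=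
  2 ≤ l.length ∧ l.Chain' G.Adj ∧
    ∀ i j : Fin l.length, i < j → f (l.get i) ≠ 0 → f (l.get j) ≠ 0 →
      (∀ k : Fin l.length, i < k → k < j → f (l.get k) = 0) →
      0 < f (l.get i) * chainSign σ ((l.drop i.val).take (j.val - i.val + 1)) * f (l.get j)

/-- `x` and `y` are connected by a weak nodal domain walk (W-walk). -/
def WConn (G : SimpleGraph V) (σ : V → V → ℝ) (f : V → ℝ) (x y : V) : Prop :=
  ∃ l : List V, IsWWalk G σ f l ∧ l.head? = some x ∧ l.getLast? = some y

/-- The weak nodal domain (as a vertex set) associated with the class of the non-zero `w`: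
the class `W` of `w` together with all vertices having a W-walk to some vertex of `W`. -/
def weakClass (G : SimpleGraph V) (σ : V → V → ℝ) (f : V → ℝ) (w : V) : Set V :=
  {x | (f x ≠ 0 ∧ (x = w ∨ WConn G σ f x w)) ∨
       ∃ u, f u ≠ 0 ∧ (u = w ∨ WConn G σ f u w) ∧ WConn G σ f x u}

/-- The set of weak nodal domains (as vertex sets) of `f`. -/
def weakDomains (G : SimpleGraph V) (σ : V → V → ℝ) (f : V → ℝ) : Set (Set V) :=
  {D | ∃ w, f w ≠ 0 ∧ D = weakClass G σ f w}

/-- 𝔚(f): the number of weak nodal domains of `f`. -/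
noncomputable def numWeak (G : SimpleGraph V) (σ : V → V → ℝ) (f : V → ℝ) : ℕ :=
  Nat.card (weakDomains G σ f)

/-- `σ` is a valid signature on `G`: symmetric and ±1-valued on edges. -/
def IsSignature (G : SimpleGraph V) (σ : V → V → ℝ) : Prop :=
  (∀ x y, σ x y = σ y x) ∧ ∀ x y, G.Adj x y → σ x y = 1 ∨ σ x y = -1

/-- `M` is compatible with the signed graph `(G, σ)`: `(G, σ)` is the induced
signed graph of `M`. -/
def Compatible (M : Matrix V V ℝ) (G : SimpleGraph V) (σ : V → V → ℝ) : Prop :=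
  (∀ x y, G.Adj x y ↔ x ≠ y ∧ M x y ≠ 0) ∧
  (∀ x y, G.Adj x y → σ x y = -(M x y / |M x y|))

/-- A signed graph is balanced if every cycle has positive sign. -/
def IsBalanced (G : SimpleGraph V) (σ : V → V → ℝ) : Prop :=
  ∀ (x : V) (p : G.Walk x x), p.IsCycle → chainSign σ p.support = 1

/-- A signed graph is antibalanced if its negation is balanced. -/
def IsAntibalanced (G : SimpleGraph V) (σ : V → V → ℝ) : Prop :=
  IsBalanced G (fun x y => -(σ x y))

/-- ℓ(G) = |E| - |V| + c(G), the cyclomatic number of `G`. -/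
noncomputable def cyclomatic (G : SimpleGraph V) : ℕ :=
  Nat.card G.edgeSet + Nat.card G.ConnectedComponent - Nat.card V

/-- The subgraph of `G` on the edges `{x,y}` with `f x * σ x y * f y > 0`. -/
def posSubgraph (G : SimpleGraph V) (σ : V → V → ℝ) (f : V → ℝ) : SimpleGraph V where
  Adj x y := G.Adj x y ∧ 0 < f x * σ x y * f y ∧ 0 < f y * σ y x * f x
  symm := ⟨fun _ _ h => ⟨h.1.symm, h.2.2, h.2.1⟩⟩
  loopless := ⟨fun x h => G.loopless.irrefl x h.1⟩

/-- `x` is tree-like: removing `x` and its incident edges increases the number of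
connected components by `d_x - 1`. -/
def IsTreeLike (G : SimpleGraph V) (x : V) : Prop :=
  Nat.card (SimpleGraph.induce {y | y ≠ x} G).ConnectedComponent + 1
    = Nat.card G.ConnectedComponent + Nat.card (G.neighborSet x)

/-- The Fiedler zero set of `f` on `G`. -/
def fiedlerZeroSet (G : SimpleGraph V) (f : V → ℝ) : Set V :=
  {x | f x = 0 ∧ ((∀ y, G.Adj x y → f y = 0) ∨ ¬ IsTreeLike G x)}

end NodalDefs

/-!
Let `c` be the largest eigenvalue of `M`, so that `c • 1 - M` is positive semidefinite. Conjugating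
it by the diagonal `±1` matrix `D` of a 2-colouring of `G` gives a positive semidefinite matrix
`B` which is again a generalized Laplacian of `G` (bipartiteness flips the sign of every edge
entry), with `D f` in its kernel. Perron–Frobenius: for such `B` and a kernel vector `v`, replacing
`v` by `|v|` does not increase the quadratic form, so `|v|` is a kernel vector too; a kernel vector
`g ≥ 0` vanishing at a vertex vanishes at its neighbours, so by connectedness `v` vanishes nowhere,
and comparing the two quadratic forms term by term gives `v x * v y > 0` on every edge.

Hence `f` vanishes nowhere and changes sign across every edge, so each vertex is a strong and a
weak nodal domain by itself. Since no `c`-eigenvector has a zero, a combination of two of them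
that vanishes at one vertex is zero, so the `c`-eigenspace is a line.
-/

section AlternatingSign

variable {V : Type*} {G : SimpleGraph V} {σ : V → V → ℝ} {f : V → ℝ}

lemma not_sConn_of_adj_neg (hneg : ∀ x y, G.Adj x y → f x * σ x y * f y < 0) (x y : V) :
    ¬ SConn G σ f x y := by
  rintro ⟨_ | ⟨a, _ | ⟨b, t⟩⟩, hlen, hchain, -, -⟩
  · simp at hlen
  · simp at hlen
  · obtain ⟨hab, hpos⟩ := (List.isChain_cons_cons.mp hchain).1
    exact (hneg a b hab).not_gt hpos

lemma not_wConn_of_adj_neg (hneg : ∀ x y, G.Adj x y → f x * σ x y * f y < 0)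
    (hf : ∀ x, f x ≠ 0) (x y : V) : ¬ WConn G σ f x y := by
  rintro ⟨_ | ⟨a, _ | ⟨b, t⟩⟩, ⟨hlen, hchain, hsign⟩, -, -⟩
  · simp at hlen
  · simp at hlen
  · -- `f` has no zeros, so the first two vertices are consecutive non-zeros of the walk
    have hpos := hsign ⟨0, by simp⟩ ⟨1, by simp⟩ (by simp) (hf a) (hf b)
      (fun k hk0 hk1 => by simp only [Fin.lt_def] at hk0 hk1; omega)
    exact (hneg a b (List.isChain_cons_cons.mp hchain).1).not_gt
      (by simpa [chainSign] using hpos)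

lemma strongDomains_eq_range_singleton (hneg : ∀ x y, G.Adj x y → f x * σ x y * f y < 0)
    (hf : ∀ x, f x ≠ 0) : strongDomains G σ f = Set.range fun w : V => ({w} : Set V) := by
  have hclass : ∀ w, strongClass G σ f w = {w} := fun w => by
    ext x
    simpa [strongClass, hf x] using fun h => absurd h (not_sConn_of_adj_neg hneg x w)
  ext D
  simp [strongDomains, hf, hclass, eq_comm]

lemma weakDomains_eq_range_singleton (hneg : ∀ x y, G.Adj x y → f x * σ x y * f y < 0)
    (hf : ∀ x, f x ≠ 0) : weakDomains G σ f = Set.range fun w : V => ({w} : Set V) := by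
  have hclass : ∀ w, weakClass G σ f w = {w} := fun w => by
    ext x
    simp [weakClass, hf x, not_wConn_of_adj_neg hneg hf]
  ext D
  simp [weakDomains, hf, hclass, eq_comm]

theorem numStrong_eq_card (hneg : ∀ x y, G.Adj x y → f x * σ x y * f y < 0)
    (hf : ∀ x, f x ≠ 0) : numStrong G σ f = Nat.card V := by
  rw [numStrong, strongDomains_eq_range_singleton hneg hf,
    Nat.card_range_of_injective Set.singleton_injective]

theorem numWeak_eq_card (hneg : ∀ x y, G.Adj x y → f x * σ x y * f y < 0)
    (hf : ∀ x, f x ≠ 0) : numWeak G σ f = Nat.card V := by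
  rw [numWeak, weakDomains_eq_range_singleton hneg hf,
    Nat.card_range_of_injective Set.singleton_injective]

end AlternatingSign

namespace SimpleGraph

variable {V : Type*} {G : SimpleGraph V}

theorem Connected.forall_of_adj (hG : G.Connected) {p : V → Prop}
    (hp : ∀ x y, G.Adj x y → p x → p y) {x : V} (hx : p x) (y : V) : p y := by
  obtain ⟨w⟩ := hG x y
  induction w with
  | nil => exact hx
  | cons h _ ih => exact ih (hp _ _ h hx)

theorem Colorable.exists_sign (h : G.Colorable 2) :
    ∃ s : V → ℝ, (∀ x, s x * s x = 1) ∧ ∀ x y, G.Adj x y → s x * s y = -1 := by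
  obtain ⟨C⟩ := h
  refine ⟨fun x => (-1) ^ (C x : ℕ), fun x => by simp [← pow_add, ← two_mul], fun x y hxy => ?_⟩
  show (-1 : ℝ) ^ (C x : ℕ) * (-1) ^ (C y : ℕ) = -1
  have hne := C.valid hxy
  generalize C x = a at *
  generalize C y = b at *
  fin_cases a <;> fin_cases b <;> simp_all

def IsGeneralizedLaplacian (G : SimpleGraph V) (M : Matrix V V ℝ) : Prop :=
  ∀ i j, i ≠ j → (G.Adj i j → M i j < 0) ∧ (¬G.Adj i j → M i j = 0)

end SimpleGraph

section Spectrum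

variable {ι : Type*} [Fintype ι]

lemma Matrix.dotProduct_mulVec_eq_sum (B : Matrix ι ι ℝ) (v : ι → ℝ) :
    v ⬝ᵥ B *ᵥ v = ∑ p : ι × ι, v p.1 * B p.1 p.2 * v p.2 := by
  simp [dotProduct, mulVec, Finset.mul_sum, Fintype.sum_prod_type, mul_assoc]

lemma Nat.card_setOf_eq_of_map_eq {α : Type*} {g g' : ι → α}
    (h : Finset.univ.val.map g = Finset.univ.val.map g') (c : α) :
    Nat.card {i | g i = c} = Nat.card {i | g' i = c} := by
  classical
  have hcount : ∀ φ : ι → α, Nat.card {i | φ i = c} = (Finset.univ.val.map φ).count c := by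
    intro φ
    rw [Multiset.count_map, Nat.card_eq_fintype_card, Fintype.card_subtype]
    simp [eq_comm, Finset.card, Finset.filter_val]
  rw [hcount, hcount, h]

variable [DecidableEq ι]

lemma Matrix.IsHermitian.posSemidef_smul_one_sub {A : Matrix ι ι ℝ} (hA : A.IsHermitian) {c : ℝ}
    (hc : ∀ i, hA.eigenvalues i ≤ c) : (c • (1 : Matrix ι ι ℝ) - A).PosSemidef := by
  rw [posSemidef_iff_isHermitian_and_spectrum_nonneg, ← Algebra.algebraMap_eq_smul_one,
    ← spectrum.singleton_sub_eq, hA.spectrum_real_eq_range_eigenvalues]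
  refine ⟨(IsSelfAdjoint.algebraMap _ (IsSelfAdjoint.all c)).sub hA, ?_⟩
  rintro _ ⟨_, rfl, _, ⟨i, rfl⟩, rfl⟩
  simpa using hc i

lemma Matrix.IsHermitian.subsingleton_eigenvalues_eq {A : Matrix ι ι ℝ} (hA : A.IsHermitian)
    {c : ℝ} (h : ∀ v : ι → ℝ, v ≠ 0 → A *ᵥ v = c • v → ∀ x, v x ≠ 0) :
    {i | hA.eigenvalues i = c}.Subsingleton := by
  intro i hi j hj
  by_contra hij
  set b := hA.eigenvectorBasis
  have hb_eig : ∀ k, hA.eigenvalues k = c → A *ᵥ ⇑(b k) = c • ⇑(b k) := fun k hk => by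
    rw [hA.mulVec_eigenvectorBasis, hk]
  set w : EuclideanSpace ℝ ι := b j i • b i - b i i • b j
  have hw_eig : A *ᵥ ⇑w = c • ⇑w := by
    simp only [w, WithLp.ofLp_sub, WithLp.ofLp_smul, mulVec_sub, mulVec_smul, hb_eig i hi,
      hb_eig j hj, smul_sub, smul_comm c]
  have hw : w = 0 := by
    by_contra hw
    refine h _ (by simpa using hw) hw_eig i ?_
    simp only [w, PiLp.sub_apply, PiLp.smul_apply, smul_eq_mul]
    ring
  have hinner : inner ℝ (b j) w = -b i i := by
    simp [w, inner_sub_right, inner_smul_right, orthonormal_iff_ite.mp b.orthonormal, Ne.symm hij]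
  rw [hw, inner_zero_right] at hinner
  exact h _ (by simpa using b.orthonormal.ne_zero i) (hb_eig i hi) i (by linarith)

lemma Matrix.IsHermitian.map_eigenvalues_eq_of_charpoly_eq {A : Matrix ι ι ℝ}
    (hA : A.IsHermitian) {μ : ι → ℝ} (h : A.charpoly = ∏ i, (X - C (μ i))) :
    Finset.univ.val.map hA.eigenvalues = Finset.univ.val.map μ := by
  have hroots := hA.roots_charpoly_eq_eigenvalues
  rw [h, roots_prod _ _ (by simp [Finset.prod_ne_zero_iff, X_sub_C_ne_zero])] at hroots
  simpa using hroots.symm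

end Spectrum

namespace SimpleGraph.IsGeneralizedLaplacian

variable {ι : Type*} {G : SimpleGraph ι} {B : Matrix ι ι ℝ}

lemma nonpos_of_ne (hB : G.IsGeneralizedLaplacian B) {i j : ι} (hij : i ≠ j) : B i j ≤ 0 := by
  by_cases h : G.Adj i j
  · exact ((hB i j hij).1 h).le
  · exact ((hB i j hij).2 h).le

lemma abs_mul_mul_abs_le (hB : G.IsGeneralizedLaplacian B) (v : ι → ℝ) (i j : ι) :
    |v i| * B i j * |v j| ≤ v i * B i j * v j := by
  rcases eq_or_ne i j with rfl | hij
  · rw [mul_right_comm, abs_mul_abs_self, mul_right_comm]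
  · calc |v i| * B i j * |v j| = B i j * |v i * v j| := by rw [abs_mul]; ring
      _ ≤ B i j * (v i * v j) := mul_le_mul_of_nonpos_left (le_abs_self _) (hB.nonpos_of_ne hij)
      _ = v i * B i j * v j := by ring

variable [Fintype ι]

lemma dotProduct_mulVec_abs_le (hB : G.IsGeneralizedLaplacian B) (v : ι → ℝ) :
    |v| ⬝ᵥ B *ᵥ |v| ≤ v ⬝ᵥ B *ᵥ v := by
  rw [dotProduct_mulVec_eq_sum, dotProduct_mulVec_eq_sum]
  exact Finset.sum_le_sum fun p _ => hB.abs_mul_mul_abs_le v p.1 p.2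

lemma eq_zero_of_adj_of_mulVec_eq_zero (hB : G.IsGeneralizedLaplacian B) {g : ι → ℝ}
    (hg : 0 ≤ g) (hBg : B *ᵥ g = 0) {x y : ι} (hxy : G.Adj x y) (hx : g x = 0) : g y = 0 := by
  have hsum : ∑ j, B x j * g j = 0 := congrFun hBg x
  have hterm : ∀ j ∈ Finset.univ, B x j * g j ≤ 0 := fun j _ => by
    rcases eq_or_ne x j with rfl | hxj
    · simp [hx]
    · exact mul_nonpos_of_nonpos_of_nonneg (hB.nonpos_of_ne hxj) (hg j)
  have hy := (Finset.sum_eq_zero_iff_of_nonpos hterm).mp hsum y (Finset.mem_univ y)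
  exact (mul_eq_zero.mp hy).resolve_left ((hB x y hxy.ne).1 hxy).ne

theorem ne_zero_and_mul_pos_of_mulVec_eq_zero (hB : G.IsGeneralizedLaplacian B)
    (hPSD : B.PosSemidef) (hG : G.Connected) {v : ι → ℝ} (hv : v ≠ 0) (hBv : B *ᵥ v = 0) :
    (∀ x, v x ≠ 0) ∧ ∀ x y, G.Adj x y → 0 < v x * v y := by
  have hquad : v ⬝ᵥ B *ᵥ v = 0 := by rw [hBv, dotProduct_zero]
  have habs_quad : |v| ⬝ᵥ B *ᵥ |v| = 0 :=
    le_antisymm (hquad ▸ hB.dotProduct_mulVec_abs_le v)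
      (by simpa using hPSD.dotProduct_mulVec_nonneg |v|)
  have habs_ker : B *ᵥ |v| = 0 :=
    (hPSD.dotProduct_mulVec_zero_iff _).mp (by simpa using habs_quad)
  have hnz : ∀ x, v x ≠ 0 := fun x hx => hv <| funext fun y => by
    simpa using hG.forall_of_adj (p := fun y => |v| y = 0)
      (fun _ _ hab => hB.eq_zero_of_adj_of_mulVec_eq_zero (abs_nonneg v) habs_ker hab)
      (by simpa using hx) y
  refine ⟨hnz, fun x y hxy => ?_⟩
  have hsum : ∑ p : ι × ι, |v p.1| * B p.1 p.2 * |v p.2|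
      = ∑ p : ι × ι, v p.1 * B p.1 p.2 * v p.2 := by
    rw [← dotProduct_mulVec_eq_sum, hquad]
    simpa [dotProduct_mulVec_eq_sum] using habs_quad
  have hxy_eq := (Finset.sum_eq_sum_iff_of_le fun p _ => hB.abs_mul_mul_abs_le v p.1 p.2).mp hsum
    (x, y) (Finset.mem_univ _)
  have hvxy : v x * v y = |v x| * |v y| := by
    apply mul_left_cancel₀ ((hB x y hxy.ne).1 hxy).ne
    linear_combination -hxy_eq
  rw [hvxy]
  exact mul_pos (abs_pos.mpr (hnz x)) (abs_pos.mpr (hnz y))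

theorem ne_zero_and_mul_neg_of_mulVec_eq_smul [DecidableEq ι] {M : Matrix ι ι ℝ}
    (hM : G.IsGeneralizedLaplacian M) (hH : M.IsHermitian) (hG : G.Connected)
    (hbip : G.Colorable 2) {c : ℝ} (hc : ∀ i, hH.eigenvalues i ≤ c) {v : ι → ℝ} (hv : v ≠ 0)
    (heig : M *ᵥ v = c • v) :
    (∀ x, v x ≠ 0) ∧ ∀ x y, G.Adj x y → v x * v y < 0 := by
  obtain ⟨s, hss, hsadj⟩ := hbip.exists_sign
  set D := diagonal s
  have hDD : D * D = 1 := by rw [diagonal_mul_diagonal, funext hss, diagonal_one]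
  set B := D * (c • 1 - M) * D
  have hB_lap : G.IsGeneralizedLaplacian B := by
    intro i j hij
    have hBij : B i j = -(s i * s j) * M i j := by
      simp only [B, D, mul_diagonal, diagonal_mul, Matrix.sub_apply, Matrix.smul_apply,
        one_apply_ne hij]
      ring
    rw [hBij]
    refine ⟨fun h => ?_, fun h => by simp [(hM i j hij).2 h]⟩
    rw [hsadj i j h, neg_neg, one_mul]
    exact (hM i j hij).1 h
  have hB_psd : B.PosSemidef := by
    simpa [D] using (hH.posSemidef_smul_one_sub hc).conjTranspose_mul_mul_same D
  have hker : B *ᵥ (D *ᵥ v) = 0 := by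
    rw [mulVec_mulVec, mul_assoc, hDD, mul_one, ← mulVec_mulVec, sub_mulVec, heig, smul_mulVec,
      one_mulVec, sub_self, mulVec_zero]
  have hDv : D *ᵥ v ≠ 0 := fun h => hv <| by
    rw [← one_mulVec v, ← hDD, ← mulVec_mulVec, h, mulVec_zero]
  obtain ⟨hnz, hpos⟩ := hB_lap.ne_zero_and_mul_pos_of_mulVec_eq_zero hB_psd hG hDv hker
  simp only [D, mulVec_diagonal] at hnz hpos
  refine ⟨fun x hx => hnz x (by simp [hx]), fun x y hxy => ?_⟩
  have hflip : s x * v x * (s y * v y) = -(v x * v y) := by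
    linear_combination (v x * v y) * hsadj x y hxy
  linarith [hpos x y hxy]

end SimpleGraph.IsGeneralizedLaplacian

/-- Roth: for a generalized Laplacian of a connected bipartite graph, the
largest eigenvalue is simple and 𝔚(f_n) = 𝔖(f_n) = n. -/
theorem stmt_5 (n : ℕ) (hn : 0 < n) (G : SimpleGraph (Fin n))
    (hconn : G.Connected) (hbip : G.Colorable 2)
    (M : Matrix (Fin n) (Fin n) ℝ) (hM : M.IsSymm)
    (hgenLap : ∀ i j : Fin n, i ≠ j → (G.Adj i j → M i j < 0) ∧ (¬G.Adj i j → M i j = 0))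
    (μ : Fin n → ℝ) (hmono : Monotone μ)
    (hchar : M.charpoly = ∏ i, (Polynomial.X - Polynomial.C (μ i)))
    (f : Fin n → ℝ) (hf : f ≠ 0)
    (heig : M.mulVec f = μ ⟨n - 1, by omega⟩ • f) :
    Nat.card {i : Fin n | μ i = μ ⟨n - 1, by omega⟩} = 1 ∧
    numWeak G (fun _ _ => (1 : ℝ)) f = n ∧ numStrong G (fun _ _ => (1 : ℝ)) f = n := by
  set c := μ ⟨n - 1, by omega⟩
  have hH : M.IsHermitian := isHermitian_iff_isSymm.mpr hM
  have hspec := hH.map_eigenvalues_eq_of_charpoly_eq hchar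
  have hrange : Set.range hH.eigenvalues = Set.range μ := by
    ext x
    simpa using congrArg (x ∈ ·) hspec
  have hle : ∀ i, hH.eigenvalues i ≤ c := fun i => by
    obtain ⟨j, hj⟩ := hrange ▸ Set.mem_range_self i
    exact hj ▸ hmono (Fin.le_def.mpr (Nat.le_sub_one_of_lt j.isLt))
  have htop := fun v : Fin n → ℝ =>
    SimpleGraph.IsGeneralizedLaplacian.ne_zero_and_mul_neg_of_mulVec_eq_smul hgenLap hH hconn hbip
      hle (v := v)
  obtain ⟨hnz, halt⟩ := htop f hf heig
  have hneg : ∀ x y, G.Adj x y → f x * 1 * f y < 0 := by simpa using halt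
  refine ⟨?_, by rw [numWeak_eq_card hneg hnz, Nat.card_fin],
    by rw [numStrong_eq_card hneg hnz, Nat.card_fin]⟩
  rw [← Nat.card_setOf_eq_of_map_eq hspec, Nat.card_eq_one_iff_unique]
  obtain ⟨i, hi⟩ : c ∈ Set.range hH.eigenvalues := hrange ▸ Set.mem_range_self _
  exact ⟨(hH.subsingleton_eigenvalues_eq fun v hv hv' => (htop v hv hv').1).coe_sort,
    ⟨⟨i, hi⟩⟩⟩
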